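/- (Lower bound on the size of the Levenshtein ball.) Let Γ be a finite type with 1 < |Γ|, let S be a nonempty list over Γ, and let k ≥ 1. Then the cardinality of 𝒮_k(S,Γ) = {S' : List Γ | d_lev(S, S') ≤ k} satisfies ∑_{i=0}^{k} |Γ|^i ≤ |𝒮_k(S,Γ)| (equivalently, (|Γ|^{k+1} − 1)/(|Γ| − 1) ≤ |𝒮_k(S,Γ)|). -/

import Mathlib

/-!
Appending any word `T` with `|T| ≤ k` to `S` costs at most `|T|` insertions, so `S ++ T` lies in
the ball; distinct `T` give distinct words, and there are `∑_{i ≤ k} |Γ|^i` such `T`.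
-/

/-- The costs of the edit operations (as in the former `Mathlib.Data.List.EditDistance.Defs`). -/
structure Levenshtein.Cost (α β δ : Type*) where
  delete : α → δ
  insert : β → δ
  substitute : α → β → δ

/-- The default cost: every deletion, insertion and (non-trivial) substitution costs 1. -/
def Levenshtein.defaultCost {α : Type*} [DecidableEq α] : Levenshtein.Cost α α ℕ where
  delete _ := 1
  insert _ := 1
  substitute a b := if a = b then 0 else 1

/-- One step of the dynamic programming algorithm for the Levenshtein distance. -/
def Levenshtein.impl {α β δ : Type*} [AddZeroClass δ] [Min δ]
    (C : Levenshtein.Cost α β δ) (xs : List α) (y : β)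
    (d : {r : List δ // 0 < r.length}) : {r : List δ // 0 < r.length} :=
  let ⟨ds, w⟩ := d
  xs.zip (ds.zip ds.tail) |>.foldr
    (init := ⟨[ds.getLast (List.length_pos_iff.mp w) + C.insert y], by simp⟩)
    (fun ⟨x, d₀, d₁⟩ ⟨r, w⟩ =>
      ⟨min (C.delete x + r[0]) (min (C.insert y + d₀) (C.substitute x y + d₁)) :: r, by simp⟩)

/-- The Levenshtein distances from every suffix of `xs` to `ys`. -/
def suffixLevenshtein {α β δ : Type*} [AddZeroClass δ] [Min δ]
    (C : Levenshtein.Cost α β δ) (xs : List α) (ys : List β) :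
    {r : List δ // 0 < r.length} :=
  ys.foldr
    (Levenshtein.impl C xs)
    (xs.foldr (init := ⟨[0], by simp⟩) (fun a ⟨r, w⟩ => ⟨(C.delete a + r[0]) :: r, by simp⟩))

/-- The Levenshtein distance between two lists, with costs `C`. -/
def levenshtein {α β δ : Type*} [AddZeroClass δ] [Min δ]
    (C : Levenshtein.Cost α β δ) (xs : List α) (ys : List β) : δ :=
  let ⟨r, w⟩ := suffixLevenshtein C xs ys
  r[0]

/-- The Levenshtein (edit) distance with unit costs. -/
def dlev {Γ : Type*} [DecidableEq Γ] (S S' : List Γ) : ℕ :=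
  levenshtein Levenshtein.defaultCost S S'

namespace Levenshtein

variable {α β δ : Type*} [AddZeroClass δ] [Min δ] (C : Cost α β δ)

theorem impl_cons {x : α} {xs : List α} {y : β} {d : δ} {ds : List δ} {w}
    (w' : 0 < ds.length) :
    impl C (x :: xs) y ⟨d :: ds, w⟩ =
      let ⟨r, w⟩ := impl C xs y ⟨ds, w'⟩
      ⟨min (C.delete x + r[0]) (min (C.insert y + d) (C.substitute x y + ds[0])) :: r,
        by simp⟩ :=
  match ds, w' with | _ :: _, _ => rfl

theorem impl_cons_fst_zero {x : α} {xs : List α} {y : β} {d : δ} {ds : List δ} {w} (h)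
    (w' : 0 < ds.length) :
    (impl C (x :: xs) y ⟨d :: ds, w⟩).1[0]'h =
      let ⟨r, w⟩ := impl C xs y ⟨ds, w'⟩
      min (C.delete x + r[0]) (min (C.insert y + d) (C.substitute x y + ds[0])) :=
  match ds, w' with | _ :: _, _ => rfl

theorem impl_length {xs : List α} {y : β} (d : {r : List δ // 0 < r.length})
    (w : d.1.length = xs.length + 1) :
    (impl C xs y d).1.length = xs.length + 1 := by
  induction xs generalizing d with
  | nil => rfl
  | cons x xs ih =>
    match d, w with
    | ⟨d₁ :: d₂ :: ds, _⟩, w =>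
      rw [impl_cons C (by simp)]
      simpa using ih ⟨d₂ :: ds, by simp⟩ (by simpa using w)

end Levenshtein

section Levenshtein

open Levenshtein

variable {α β δ : Type*} [AddZeroClass δ] [Min δ] (C : Cost α β δ)

theorem suffixLevenshtein_length (xs : List α) (ys : List β) :
    (suffixLevenshtein C xs ys).1.length = xs.length + 1 := by
  induction ys with
  | nil =>
    induction xs with
    | nil => rfl
    | cons _ xs ih => simpa [suffixLevenshtein] using ih
  | cons y ys ih => exact impl_length C _ ih

theorem suffixLevenshtein_cons₂ (xs : List α) (y : β) (ys : List β) :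
    suffixLevenshtein C xs (y :: ys) = impl C xs y (suffixLevenshtein C xs ys) :=
  rfl

theorem suffixLevenshtein_cons₁ (x : α) (xs : List α) (ys : List β) :
    suffixLevenshtein C (x :: xs) ys =
      ⟨levenshtein C (x :: xs) ys :: (suffixLevenshtein C xs ys).1, by simp⟩ := by
  induction ys with
  | nil => rfl
  | cons y ys ih =>
    have hlen : 0 < (suffixLevenshtein C xs ys).1.length := by simp [suffixLevenshtein_length]
    have htail : (suffixLevenshtein C (x :: xs) (y :: ys)).1.tail =
        (suffixLevenshtein C xs (y :: ys)).1 := by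
      rw [suffixLevenshtein_cons₂ C (x :: xs), ih, impl_cons C hlen]
      rfl
    apply Subtype.ext
    rw [← htail]
    change _ = (suffixLevenshtein C (x :: xs) (y :: ys)).1[0]'_ :: _
    obtain ⟨a, r, hs⟩ :=
      List.exists_cons_of_length_pos (suffixLevenshtein C (x :: xs) (y :: ys)).2
    simp only [hs, List.getElem_cons_zero, List.tail_cons]

@[simp] theorem levenshtein_nil_cons (y : β) (ys : List β) :
    levenshtein C ([] : List α) (y :: ys) = levenshtein C [] ys + C.insert y := by
  have hsingleton (zs : List β) :
      (suffixLevenshtein C ([] : List α) zs).1 = [levenshtein C [] zs] := by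
    change _ = [(suffixLevenshtein C [] zs).1[0]'_]
    obtain ⟨a, ha⟩ := List.length_eq_one_iff.mp (suffixLevenshtein_length C [] zs)
    simp only [ha, List.getElem_cons_zero]
  change (suffixLevenshtein C [] ys).1.getLast _ + C.insert y = _
  simp [hsingleton]

theorem levenshtein_cons_cons (x : α) (xs : List α) (y : β) (ys : List β) :
    levenshtein C (x :: xs) (y :: ys) =
      min (C.delete x + levenshtein C xs (y :: ys))
        (min (C.insert y + levenshtein C (x :: xs) ys)
          (C.substitute x y + levenshtein C xs ys)) := by
  have hlen : 0 < (suffixLevenshtein C xs ys).1.length := by simp [suffixLevenshtein_length]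
  change (suffixLevenshtein C (x :: xs) (y :: ys)).1[0]'(by simp [suffixLevenshtein_length]) = _
  simp only [suffixLevenshtein_cons₂, suffixLevenshtein_cons₁]
  rw [impl_cons_fst_zero C _ hlen]
  rfl

end Levenshtein

section dlev

variable {Γ : Type*} [DecidableEq Γ]

@[simp] theorem dlev_nil_left (T : List Γ) : dlev [] T = T.length := by
  induction T with
  | nil => rfl
  | cons y ys ih => simpa [dlev, Levenshtein.defaultCost] using ih

theorem dlev_cons_cons (x : Γ) (xs : List Γ) (y : Γ) (ys : List Γ) :
    dlev (x :: xs) (y :: ys) =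
      min (dlev xs (y :: ys) + 1)
        (min (dlev (x :: xs) ys + 1) (dlev xs ys + if x = y then 0 else 1)) := by
  simp only [dlev, levenshtein_cons_cons, Levenshtein.defaultCost, add_comm]

theorem length_le_length_add_dlev (S T : List Γ) : T.length ≤ S.length + dlev S T := by
  induction S generalizing T with
  | nil => simp
  | cons x xs ih =>
    induction T with
    | nil => simp
    | cons y ys ihy =>
      have := ih (y :: ys)
      have := ih ys
      rw [dlev_cons_cons]
      split_ifs <;> simp only [List.length_cons] at * <;> omega

theorem dlev_self_append_le (S T : List Γ) : dlev S (S ++ T) ≤ T.length := by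
  induction S with
  | nil => simp
  | cons x xs ih =>
    rw [List.cons_append, dlev_cons_cons, if_pos rfl]
    omega

theorem finite_setOf_dlev_le [Finite Γ] (S : List Γ) (k : ℕ) :
    {S' : List Γ | dlev S S' ≤ k}.Finite :=
  (List.finite_length_le Γ (S.length + k)).subset fun S' hS' =>
    (length_le_length_add_dlev S S').trans (Nat.add_le_add_left hS' _)

end dlev

section card

variable {Γ : Type*} [Fintype Γ]

theorem ncard_setOf_length_eq (n : ℕ) :
    {l : List Γ | l.length = n}.ncard = Fintype.card Γ ^ n := by
  rw [← Nat.card_coe_set_eq]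
  exact (Nat.card_eq_fintype_card (α := List.Vector Γ n)).trans (card_vector n)

theorem ncard_setOf_length_le (k : ℕ) :
    {l : List Γ | l.length ≤ k}.ncard = ∑ i ∈ Finset.range (k + 1), Fintype.card Γ ^ i := by
  induction k with
  | zero => simp
  | succ k ih =>
    have hsplit : {l : List Γ | l.length ≤ k + 1} =
        {l | l.length ≤ k} ∪ {l | l.length = k + 1} :=
      Set.ext fun _ => Nat.le_succ_iff
    have hdisj : Disjoint {l : List Γ | l.length ≤ k} {l | l.length = k + 1} :=
      Set.disjoint_left.mpr fun _ (hle : _ ≤ k) (heq : _ = k + 1) => by omega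
    rw [hsplit, Set.ncard_union_eq hdisj (List.finite_length_le Γ k)
      (List.finite_length_eq Γ (k + 1)), ih, ncard_setOf_length_eq,
      Finset.sum_range_succ _ (k + 1)]

end card

theorem sum_pow_le_ncard_ball_general {Γ : Type*} [DecidableEq Γ] [Fintype Γ]
    (S : List Γ) (k : ℕ) :
    ∑ i ∈ Finset.range (k + 1), (Fintype.card Γ) ^ i ≤
      Set.ncard {S' : List Γ | dlev S S' ≤ k} :=
  calc ∑ i ∈ Finset.range (k + 1), Fintype.card Γ ^ i
      = {T : List Γ | T.length ≤ k}.ncard := (ncard_setOf_length_le k).symm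
    _ = ((S ++ ·) '' {T : List Γ | T.length ≤ k}).ncard :=
      (Set.ncard_image_of_injective _ (List.append_right_injective S)).symm
    _ ≤ {S' : List Γ | dlev S S' ≤ k}.ncard :=
      Set.ncard_le_ncard (Set.image_subset_iff.mpr fun T hT => (dlev_self_append_le S T).trans hT)
        (finite_setOf_dlev_le S k)

/-- Lower bound on the size of the Levenshtein ball of radius `k`. -/
theorem sum_pow_le_ncard_ball {Γ : Type*} [DecidableEq Γ] [Fintype Γ]
    (hΓ : 1 < Fintype.card Γ) (S : List Γ) (hS : S ≠ []) (k : ℕ) (hk : 1 ≤ k) :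
    ∑ i ∈ Finset.range (k + 1), (Fintype.card Γ) ^ i ≤
      Set.ncard {S' : List Γ | dlev S S' ≤ k} :=
  sum_pow_le_ncard_ball_general S k
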